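/- Let K ≥ 3 be an integer, θ_k = 2πk/K for k = 0,…,K−1, and let x̃_k = x_c + (R + f_k)cos θ_k, ỹ_k = y_c + (R + f_k)sin θ_k. Set x̃_c = x_c + (1/K)∑_{k=0}^{K−1} f_k cos θ_k, ỹ_c = y_c + (1/K)∑_{k=0}^{K−1} f_k sin θ_k, and R̃ = R + (1/K)∑_{k=0}^{K−1} f_k. Then the radius stationarity equation holds: ∑_{k=0}^{K−1}[(x̃_k − x̃_c − R̃ cos θ_k)cos θ_k + (ỹ_k − ỹ_c − R̃ sin θ_k)sin θ_k] = 0. In other words, the fitted circle radius is the original radius modified by the average (1/K)∑_{k=0}^{K−1} f_k of the force values. -/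

import Mathlib

/-!
The residual at angle `θ_k` is `((R + f_k) - R̃) - (x̃_c - x_c) cos θ_k - (ỹ_c - y_c) sin θ_k`
by `cos² + sin² = 1`. Summing, the first part vanishes because `R̃ - R` is the mean of the
`f_k`, and the other two, whatever the centre, because the `e^{iθ_k}` are the `K`-th roots of
unity, which sum to `0`.
-/

open Real Finset

lemma sum_exp_two_pi_mul_I_div_eq_zero {K : ℕ} (hK : 2 ≤ K) :
    ∑ k ∈ range K, Complex.exp (↑(2 * π * k / K) * Complex.I) = 0 := by
  have hζ := Complex.isPrimitiveRoot_exp K (by omega)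
  rw [← hζ.geom_sum_eq_zero (by omega)]
  refine sum_congr rfl fun k _ => ?_
  rw [← Complex.exp_nat_mul]
  push_cast
  ring_nf

lemma sum_cos_two_pi_mul_div_eq_zero {K : ℕ} (hK : 2 ≤ K) :
    ∑ k ∈ range K, cos (2 * π * k / K) = 0 := by
  simpa only [Complex.re_sum, Complex.exp_ofReal_mul_I_re, Complex.zero_re] using
    congrArg Complex.re (sum_exp_two_pi_mul_I_div_eq_zero hK)

lemma sum_sin_two_pi_mul_div_eq_zero {K : ℕ} (hK : 2 ≤ K) :
    ∑ k ∈ range K, sin (2 * π * k / K) = 0 := by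
  simpa only [Complex.im_sum, Complex.exp_ofReal_mul_I_im, Complex.zero_im] using
    congrArg Complex.im (sum_exp_two_pi_mul_I_div_eq_zero hK)

theorem radius_stationarity_general
    (K : ℕ) (hK : 3 ≤ K) (xc yc R : ℝ) (f : ℕ → ℝ)
    (θ : ℕ → ℝ) (hθ : ∀ k, θ k = 2 * Real.pi * k / K)
    (xt yt : ℕ → ℝ)
    (hxt : ∀ k, xt k = xc + (R + f k) * Real.cos (θ k))
    (hyt : ∀ k, yt k = yc + (R + f k) * Real.sin (θ k))
    (xtc ytc Rt : ℝ)
    (hRt : Rt = R + (1 / (K : ℝ)) * ∑ k ∈ Finset.range K, f k) :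
    ∑ k ∈ Finset.range K,
      ((xt k - xtc - Rt * Real.cos (θ k)) * Real.cos (θ k) +
       (yt k - ytc - Rt * Real.sin (θ k)) * Real.sin (θ k)) = 0 := by
  have hcos : ∑ k ∈ range K, cos (θ k) = 0 := by
    simpa only [hθ] using sum_cos_two_pi_mul_div_eq_zero (by omega)
  have hsin : ∑ k ∈ range K, sin (θ k) = 0 := by
    simpa only [hθ] using sum_sin_two_pi_mul_div_eq_zero (by omega)
  have hKne : (K : ℝ) ≠ 0 := Nat.cast_ne_zero.mpr (by omega)
  calc _ = ∑ k ∈ range K, (f k - (Rt - R) - (xtc - xc) * cos (θ k) - (ytc - yc) * sin (θ k)) :=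
        sum_congr rfl fun k _ => by
          rw [hxt, hyt]
          linear_combination (f k - (Rt - R)) * sin_sq_add_cos_sq (θ k)
    _ = ∑ k ∈ range K, f k - K * (Rt - R) - (xtc - xc) * ∑ k ∈ range K, cos (θ k)
          - (ytc - yc) * ∑ k ∈ range K, sin (θ k) := by
        simp only [sum_sub_distrib, ← mul_sum, sum_const, card_range, nsmul_eq_mul]
        ring
    _ = 0 := by
        rw [hcos, hsin, hRt]
        field_simp
        ring

/-- Radius stationarity: with the shifted-average center and the radius
updated by the average force, the radius first-order equation holds. -/
theorem radius_stationarity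
    (K : ℕ) (hK : 3 ≤ K) (xc yc R : ℝ) (f : ℕ → ℝ)
    (θ : ℕ → ℝ) (hθ : ∀ k, θ k = 2 * Real.pi * k / K)
    (xt yt : ℕ → ℝ)
    (hxt : ∀ k, xt k = xc + (R + f k) * Real.cos (θ k))
    (hyt : ∀ k, yt k = yc + (R + f k) * Real.sin (θ k))
    (xtc ytc Rt : ℝ)
    (hxtc : xtc = xc + (1 / (K : ℝ)) * ∑ k ∈ Finset.range K, f k * Real.cos (θ k))
    (hytc : ytc = yc + (1 / (K : ℝ)) * ∑ k ∈ Finset.range K, f k * Real.sin (θ k))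
    (hRt : Rt = R + (1 / (K : ℝ)) * ∑ k ∈ Finset.range K, f k) :
    ∑ k ∈ Finset.range K,
      ((xt k - xtc - Rt * Real.cos (θ k)) * Real.cos (θ k) +
       (yt k - ytc - Rt * Real.sin (θ k)) * Real.sin (θ k)) = 0 :=
  radius_stationarity_general K hK xc yc R f θ hθ xt yt hxt hyt xtc ytc Rt hRt
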